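/- Let T be strictly increasing and càdlàg on [0,∞) with continuous right-continuous inverse A. Suppose [g', d') (or (g',d')) is a maximal interval on which a given càdlàg path X∘A differs from a fixed point o, arising as the image under the time change of an excursion interval of X. Then the corresponding excursion interval of X is [A(g'), A(d')) (respectively (A(g'), A(d'))); i.e., applying A to the endpoints of an excursion interval of the time-changed path recovers the original excursion interval. -/

import Mathlib

open Filter Set
open scoped NNReal Topology

/-- The right-continuous inverse `A(u) := inf{t ≥ 0 : T(t) > u}`. -/
noncomputable def rcInv (T : ℝ≥0 → ℝ≥0) (u : ℝ≥0) : ℝ≥0 :=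
  sInf {t | T t > u}

/-- `(g,d)` is an (open) excursion interval of `X` away from `o`: `X ≠ o` on
`(g,d)` and both endpoints belong to the zero set of `X` (maximality). -/
def IsExcOpen {S : Type*} (X : ℝ≥0 → S) (o : S) (g d : ℝ≥0) : Prop :=
  g < d ∧ (∀ t, g < t → t < d → X t ≠ o) ∧ X g = o ∧ X d = o

/-- `[g,d)` is a (half-open) excursion interval of `X` away from `o`: `X ≠ o` on
`[g,d)`, `X d = o`, and `g` is approximated from the left by zeros of `X`
(maximality at the left endpoint). -/
def IsExcHalf {S : Type*} (X : ℝ≥0 → S) (o : S) (g d : ℝ≥0) : Prop :=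
  g < d ∧ (∀ t, g ≤ t → t < d → X t ≠ o) ∧ X d = o ∧
    ∀ ε : ℝ≥0, 0 < ε → ∃ s, s < g ∧ g < s + ε ∧ X s = o

/-!
Since `T` is strictly increasing, `A (T t) = t`; so `A` is monotone and surjective, hence
continuous, and `X* (T t) = X t`. Every time `t` strictly between `A g'` and `A d'` is
then `A u` for `u = T t` strictly between `g'` and `d'`, so `X t ≠ o` there. At the left
endpoint of a half-open excursion, zeros of `X*` accumulating at `g'` from the left are
carried by the continuous monotone map `A` to zeros of `X` accumulating at `A g'`, and they
stay strictly to the left because `X (A g') ≠ o`.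
-/

lemma NNReal.frequently_nhdsLT_iff {g : ℝ≥0} {p : ℝ≥0 → Prop} :
    (∃ᶠ s in 𝓝[<] g, p s) ↔ ∀ ε : ℝ≥0, 0 < ε → ∃ s, s < g ∧ g < s + ε ∧ p s := by
  rcases eq_zero_or_pos g with rfl | hg
  · simpa using ⟨1, one_ne_zero⟩
  rw [(nhdsLT_basis_of_exists_lt ⟨0, hg⟩).frequently_iff]
  constructor
  · intro h ε hε
    obtain ⟨s, ⟨hgs, hsg⟩, hs⟩ := h (g - ε) (tsub_lt_self hg hε)
    exact ⟨s, hsg, lt_add_of_tsub_lt_right hgs, hs⟩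
  · intro h l hl
    obtain ⟨s, hsg, hgs, hs⟩ := h (g - l) (tsub_pos_of_lt hl)
    refine ⟨s, ⟨?_, hsg⟩, hs⟩
    exact lt_of_add_lt_add_right ((add_tsub_cancel_of_le hl.le).trans_lt hgs)

section rcInv

variable {T : ℝ≥0 → ℝ≥0}

lemma rcInv_apply_self (hT : StrictMono T) (t : ℝ≥0) : rcInv T (T t) = t := by
  have h : {s | T s > T t} = Ioi t := by
    ext s
    simp [hT.lt_iff_lt]
  rw [rcInv, h, csInf_Ioi]

lemma monotone_rcInv (htop : Tendsto T atTop atTop) : Monotone (rcInv T) :=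
  fun _ v huv => csInf_le_csInf (OrderBot.bddBelow _) (htop.eventually_gt_atTop v).exists
    fun _ ht => huv.trans_lt ht

lemma continuous_rcInv (hT : StrictMono T) (htop : Tendsto T atTop atTop) :
    Continuous (rcInv T) :=
  (monotone_rcInv htop).continuous_of_surjective fun t => ⟨T t, rcInv_apply_self hT t⟩

variable (hT : StrictMono T) (htop : Tendsto T atTop atTop)
include hT htop

lemma lt_apply_of_rcInv_lt {t u : ℝ≥0} (h : rcInv T u < t) : u < T t := by
  by_contra! hle
  have := monotone_rcInv htop hle
  rw [rcInv_apply_self hT] at this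
  exact this.not_gt h

lemma apply_lt_of_lt_rcInv {t u : ℝ≥0} (h : t < rcInv T u) : T t < u := by
  by_contra! hle
  have := monotone_rcInv htop hle
  rw [rcInv_apply_self hT] at this
  exact this.not_gt h

lemma frequently_nhdsLT_rcInv {g : ℝ≥0} {p : ℝ≥0 → Prop}
    (h : ∃ᶠ u in 𝓝[<] g, p (rcInv T u)) (hg : ¬p (rcInv T g)) :
    ∃ᶠ t in 𝓝[<] rcInv T g, p t := by
  have hle : ∀ᶠ u in 𝓝[<] g, rcInv T u ≤ rcInv T g :=
    eventually_nhdsWithin_of_forall fun _ hu => monotone_rcInv htop (le_of_lt hu)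
  have hA : Tendsto (rcInv T) (𝓝[<] g) (𝓝 (rcInv T g)) :=
    (continuous_rcInv hT htop).continuousAt.tendsto.mono_left nhdsWithin_le_nhds
  rw [frequently_nhdsWithin_iff]
  refine (hA.frequently (p := fun t => p t ∧ t ≤ rcInv T g) (h.and_eventually hle)).mono ?_
  rintro t ⟨hpt, hle⟩
  exact ⟨hpt, hle.lt_of_ne fun heq => hg (heq ▸ hpt)⟩

variable {S : Type*} {o : S} {X : ℝ≥0 → S}

lemma ne_of_rcInv_lt_of_lt_rcInv {g d t : ℝ≥0}
    (hne : ∀ u, g < u → u < d → X (rcInv T u) ≠ o) (hgt : rcInv T g < t)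
    (htd : t < rcInv T d) : X t ≠ o := by
  rw [← rcInv_apply_self hT t]
  exact hne _ (lt_apply_of_rcInv_lt hT htop hgt) (apply_lt_of_lt_rcInv hT htop htd)

lemma IsExcOpen.of_comp_rcInv {g d : ℝ≥0} (h : IsExcOpen (fun u => X (rcInv T u)) o g d) :
    IsExcOpen X o (rcInv T g) (rcInv T d) := by
  obtain ⟨hgd, hne, hXg, hXd⟩ := h
  obtain ⟨u, hgu, hud⟩ := exists_between hgd
  have hAgu : rcInv T g < rcInv T u :=
    (monotone_rcInv htop hgu.le).lt_of_ne fun heq => hne u hgu hud (show X (rcInv T u) = o from heq ▸ hXg)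
  exact ⟨hAgu.trans_le (monotone_rcInv htop hud.le),
    fun _ => ne_of_rcInv_lt_of_lt_rcInv hT htop hne, hXg, hXd⟩

lemma IsExcHalf.of_comp_rcInv {g d : ℝ≥0} (h : IsExcHalf (fun u => X (rcInv T u)) o g d) :
    IsExcHalf X o (rcInv T g) (rcInv T d) := by
  obtain ⟨hgd, hne, hXd, happrox⟩ := h
  have hXg : X (rcInv T g) ≠ o := hne g le_rfl hgd
  refine ⟨(monotone_rcInv htop hgd.le).lt_of_ne fun heq => hXg (heq ▸ hXd), ?_, hXd, ?_⟩
  · intro t hgt htd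
    rcases hgt.eq_or_lt with rfl | hgt
    · exact hXg
    · exact ne_of_rcInv_lt_of_lt_rcInv hT htop (fun u hgu => hne u hgu.le) hgt htd
  · rw [← NNReal.frequently_nhdsLT_iff] at happrox ⊢
    exact frequently_nhdsLT_rcInv hT htop happrox hXg

end rcInv

theorem stmt13_general
    {S : Type*} (o : S) (X : ℝ≥0 → S)
    (T : ℝ≥0 → ℝ≥0)
    (hstrict : StrictMono T)
    (htop : Tendsto T atTop atTop) :
    ∀ g' d' : ℝ≥0,
      (IsExcOpen (fun u => X (rcInv T u)) o g' d' →
        IsExcOpen X o (rcInv T g') (rcInv T d')) ∧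
      (IsExcHalf (fun u => X (rcInv T u)) o g' d' →
        IsExcHalf X o (rcInv T g') (rcInv T d')) :=
  fun _ _ => ⟨IsExcOpen.of_comp_rcInv hstrict htop, IsExcHalf.of_comp_rcInv hstrict htop⟩

/-- Let `T` be strictly increasing and càdlàg with continuous
right-continuous inverse `A`, and let `X* = X ∘ A` be the time-changed path.  If
`(g',d')` (resp. `[g',d')`) is an excursion interval of `X*` away from `o`, then
the corresponding excursion interval of `X` is `(A(g'), A(d'))` (resp.
`[A(g'), A(d'))`): applying `A` to the endpoints recovers the original
excursion interval. -/
theorem stmt13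
    {S : Type*} (o : S) (X : ℝ≥0 → S)
    (T : ℝ≥0 → ℝ≥0)
    (hstrict : StrictMono T)
    (hrc : ∀ t, ContinuousWithinAt T (Set.Ici t) t)
    (htop : Tendsto T atTop atTop) :
    ∀ g' d' : ℝ≥0,
      (IsExcOpen (fun u => X (rcInv T u)) o g' d' →
        IsExcOpen X o (rcInv T g') (rcInv T d')) ∧
      (IsExcHalf (fun u => X (rcInv T u)) o g' d' →
        IsExcHalf X o (rcInv T g') (rcInv T d')) :=
  stmt13_general o X T hstrict htop
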